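/- arXiv:2504.07908 — 3 statements merged into one kernel-verified Lean document; each statement's English description precedes it below -/
import Mathlib

section
/- A linear operator φ on R^n preserves vector majorization if and only if it preserves majorization restricted to probability distributions. -/
/-!
If `a = D b` with `D` doubly stochastic, then for large `t` the vectors `(a + t𝟙) / S` and
`(b + t𝟙) / S`, where `S = ∑ᵢ (bᵢ + t)`, are probability vectors related by the same `D`. Hence,
with `c = φ 𝟙`, `φ a + t c ⪯ φ b + t c` for all large `t`, and likewise with `-t` in place of `t`.
Testing these against `z ↦ ∑ᵢ |zᵢ - u|` at `u = s ± tρ` and adding, a coordinate with `cᵢ ≠ ρ`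
contributes `2 |t (cᵢ - ρ)|` to both sides once `t` is large, so summing over the values `ρ` of `c`
leaves `∑ᵢ |(φ a)ᵢ - s| ≤ ∑ᵢ |(φ b)ᵢ - s|` for every `s`. Together with `∑ φ a = ∑ φ b` this gives
`φ a ⪯ φ b` by the Hardy–Littlewood–Pólya theorem: a vector `x` outside the convex hull of the
permutations of `y` is separated from it by a linear functional `w`, but Abel summation along the
order of `w` shows `⟪w, x⟫ ≤ ⟪w, y ∘ σ⟫` for the `σ` sorting `y` like `w`, and Birkhoff's theorem
identifies that convex hull with the image of the doubly stochastic matrices.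
-/

open Matrix

/-- `P` is a permutation matrix. -/
def IsPermMatrix {n : ℕ} (P : Matrix (Fin n) (Fin n) ℝ) : Prop :=
  ∃ σ : Equiv.Perm (Fin n), P = σ.permMatrix ℝ

/-- Vector majorization: `a = D b` for some doubly stochastic `D`. -/
def VecMaj {n : ℕ} (a b : Fin n → ℝ) : Prop :=
  ∃ D ∈ doublyStochastic ℝ (Fin n), a = D.mulVec b

/-- Strong majorization of matrices: `A = D B` for some doubly stochastic `D`. -/
def StrongMaj {n m : ℕ} (A B : Matrix (Fin n) (Fin m) ℝ) : Prop :=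
  ∃ D ∈ doublyStochastic ℝ (Fin n), A = D * B

/-- `a` is a permutation of `b`. -/
def PermOf {n : ℕ} (a b : Fin n → ℝ) : Prop :=
  ∃ σ : Equiv.Perm (Fin n), ∀ i, a i = b (σ i)

open Finset Filter

theorem sum_posPart_sub_le_of_sum_abs_sub_le {ι : Type*} [Fintype ι] {x y : ι → ℝ}
    (hsum : ∑ i, x i = ∑ i, y i) (habs : ∀ s, ∑ i, |x i - s| ≤ ∑ i, |y i - s|) (s : ℝ) :
    ∑ i, (s - x i)⁺ ≤ ∑ i, (s - y i)⁺ := by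
  have key : ∀ z : ι → ℝ,
      2 * ∑ i, (s - z i)⁺ = ∑ i, |z i - s| + (Fintype.card ι * s - ∑ i, z i) := by
    intro z
    have two_mul_posPart (t : ℝ) : 2 * t⁺ = |t| + t := by
      rw [abs_add_eq_two_nsmul_posPart, two_nsmul, two_mul]
    simp only [mul_sum, two_mul_posPart, abs_sub_comm s, sum_add_distrib, sum_sub_distrib,
      sum_const, card_univ, nsmul_eq_mul]
  have := habs s
  linarith [key x, key y]

section LinearOrder

variable {ι : Type*} [LinearOrder ι]

theorem Finset.sum_mul_le_mul_sum_of_monotone {W D : ι → ℝ} (hW : Monotone W) (s : Finset ι)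
    (hD : ∀ k ∈ s, 0 ≤ ∑ j ∈ s with j ≤ k, D j) {c : ℝ} (hc : ∀ i ∈ s, W i ≤ c) :
    ∑ i ∈ s, D i * W i ≤ c * ∑ i ∈ s, D i := by
  induction s using Finset.induction_on_max generalizing c with
  | empty => simp
  | insert a s ha ih =>
    have hprefix : ∀ k ∈ s, ({j ∈ insert a s | j ≤ k} : Finset ι) = {j ∈ s | j ≤ k} := by
      intro k hk
      rw [filter_insert, if_neg (not_le.2 (ha k hk))]
    have hs : ∑ i ∈ s, D i * W i ≤ W a * ∑ i ∈ s, D i :=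
      ih (fun k hk => hprefix k hk ▸ hD k (mem_insert_of_mem hk))
        (fun i hi => hW (ha i hi).le)
    have htotal : 0 ≤ ∑ i ∈ insert a s, D i := by
      simpa [filter_true_of_mem fun j hj => (mem_insert.1 hj).elim le_of_eq (fun h => (ha j h).le)]
        using hD a (mem_insert_self a s)
    have ha' : a ∉ s := fun h => lt_irrefl a (ha a h)
    calc ∑ i ∈ insert a s, D i * W i = D a * W a + ∑ i ∈ s, D i * W i := sum_insert ha'
      _ ≤ W a * ∑ i ∈ insert a s, D i := by rw [sum_insert ha']; linarith
      _ ≤ c * ∑ i ∈ insert a s, D i :=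
        mul_le_mul_of_nonneg_right (hc a (mem_insert_self a s)) htotal

variable [Fintype ι]

theorem sum_filter_le_le_sum_filter_le_of_monotone {X Y : ι → ℝ} (hY : Monotone Y)
    (h : ∀ s, ∑ i, (s - X i)⁺ ≤ ∑ i, (s - Y i)⁺) (k : ι) :
    ∑ j with j ≤ k, Y j ≤ ∑ j with j ≤ k, X j := by
  have hY' : ∑ i, (Y k - Y i)⁺ = ∑ j with j ≤ k, (Y k - Y j) := by
    rw [sum_filter]
    refine sum_congr rfl fun i _ => ?_
    split_ifs with hik
    · exact posPart_of_nonneg (sub_nonneg.2 (hY hik))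
    · exact posPart_of_nonpos (sub_nonpos.2 (hY (not_le.1 hik).le))
  have hX : ∑ j with j ≤ k, (Y k - X j) ≤ ∑ i, (Y k - X i)⁺ :=
    (sum_le_sum fun j _ => le_posPart _).trans
      (sum_le_sum_of_subset_of_nonneg (subset_univ _) fun i _ _ => posPart_nonneg _)
  have := hX.trans ((h (Y k)).trans hY'.le)
  rw [sum_sub_distrib, sum_sub_distrib] at this
  linarith

theorem sum_mul_le_sum_mul_of_monotone {W X Y : ι → ℝ} (hW : Monotone W) (hY : Monotone Y)
    (hsum : ∑ i, X i = ∑ i, Y i) (h : ∀ s, ∑ i, (s - X i)⁺ ≤ ∑ i, (s - Y i)⁺) :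
    ∑ i, X i * W i ≤ ∑ i, Y i * W i := by
  obtain ⟨c, hc⟩ := (Set.finite_range W).bddAbove
  have := univ.sum_mul_le_mul_sum_of_monotone hW (D := X - Y)
    (fun k _ => by simpa [sum_sub_distrib] using sum_filter_le_le_sum_filter_le_of_monotone hY h k)
    (fun i _ => hc (Set.mem_range_self i))
  simpa [sub_mul, sum_sub_distrib, hsum] using this

end LinearOrder

theorem exists_perm_sum_mul_le {m : ℕ} {x y : Fin m → ℝ} (hsum : ∑ i, x i = ∑ i, y i)
    (habs : ∀ s, ∑ i, |x i - s| ≤ ∑ i, |y i - s|) (w : Fin m → ℝ) :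
    ∃ σ : Equiv.Perm (Fin m), ∑ i, x i * w i ≤ ∑ i, y (σ i) * w i := by
  set τw := Tuple.sort w
  set τy := Tuple.sort y
  refine ⟨τw.symm.trans τy, ?_⟩
  have hpos (s : ℝ) : ∑ i, (s - x (τw i))⁺ ≤ ∑ i, (s - y (τy i))⁺ := by
    simpa only [Equiv.sum_comp τw fun i => (s - x i)⁺, Equiv.sum_comp τy fun i => (s - y i)⁺]
      using sum_posPart_sub_le_of_sum_abs_sub_le hsum habs s
  calc ∑ i, x i * w i = ∑ i, x (τw i) * w (τw i) := (Equiv.sum_comp τw _).symm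
    _ ≤ ∑ i, y (τy i) * w (τw i) :=
      sum_mul_le_sum_mul_of_monotone (Tuple.monotone_sort w) (Tuple.monotone_sort y)
        (by rw [Equiv.sum_comp τw x, Equiv.sum_comp τy y, hsum]) hpos
    _ = ∑ i, y ((τw.symm.trans τy) i) * w i := by
      rw [← Equiv.sum_comp τw (fun i => y ((τw.symm.trans τy) i) * w i)]
      simp

theorem abs_add_add_abs_sub_eq_two_mul_max (a b : ℝ) : |a + b| + |a - b| = 2 * max |a| |b| := by
  grind [abs_of_nonneg, abs_of_nonpos]

theorem sum_abs_add_add_abs_sub_eq {R : Finset ℝ} {γ v T : ℝ} (hγ : γ ∈ R)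
    (h : ∀ ρ ∈ R, ρ ≠ γ → |v| ≤ |T * (γ - ρ)|) :
    ∑ ρ ∈ R, (|v + T * (γ - ρ)| + |v - T * (γ - ρ)|) = 2 * |v| + 2 * ∑ ρ ∈ R, |T * (γ - ρ)| := by
  have hterm (ρ) (hρ : ρ ∈ R) : |v + T * (γ - ρ)| + |v - T * (γ - ρ)| =
      2 * (|T * (γ - ρ)| + if ρ = γ then |v| else 0) := by
    rw [abs_add_add_abs_sub_eq_two_mul_max]
    split_ifs with hργ
    · simp [hργ]
    · rw [max_eq_right (h ρ hρ hργ), add_zero]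
  rw [sum_congr rfl hterm, ← mul_sum, sum_add_distrib, sum_ite_eq' R γ, if_pos hγ]
  ring

namespace VecMaj

variable {n : ℕ} {x y : Fin n → ℝ}

theorem smul (h : VecMaj x y) (r : ℝ) : VecMaj (r • x) (r • y) := by
  obtain ⟨D, hD, rfl⟩ := h
  exact ⟨D, hD, (mulVec_smul D r y).symm⟩

theorem add_smul_one (h : VecMaj x y) (t : ℝ) : VecMaj (x + t • 1) (y + t • 1) := by
  obtain ⟨D, hD, rfl⟩ := h
  exact ⟨D, hD, by rw [mulVec_add, mulVec_smul, mulVec_one_of_mem_doublyStochastic hD]⟩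

theorem sum_eq (h : VecMaj x y) : ∑ i, x i = ∑ i, y i := by
  obtain ⟨D, hD, rfl⟩ := h
  exact sum_mulVec_of_mem_doublyStochastic hD

theorem sum_abs_sub_le (h : VecMaj x y) (u : ℝ) : ∑ i, |x i - u| ≤ ∑ i, |y i - u| := by
  obtain ⟨D, hD, rfl⟩ := h
  have hpt (i : Fin n) : |(D *ᵥ y) i - u| ≤ (D *ᵥ fun j => |y j - u|) i := by
    have : (D *ᵥ y) i - u = ∑ j, D i j * (y j - u) := by
      simp only [mul_sub, sum_sub_distrib, ← sum_mul, sum_row_of_mem_doublyStochastic hD, one_mul]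
      rfl
    rw [this]
    refine (abs_sum_le_sum_abs _ _).trans_eq (sum_congr rfl fun j _ => ?_)
    rw [abs_mul, abs_of_nonneg (nonneg_of_mem_doublyStochastic hD)]
  exact (sum_le_sum fun i _ => hpt i).trans_eq (sum_mulVec_of_mem_doublyStochastic hD)

theorem of_mem_convexHull
    (h : x ∈ convexHull ℝ (Set.range fun σ : Equiv.Perm (Fin n) => y ∘ σ)) : VecMaj x y := by
  have himage : Set.range (fun σ : Equiv.Perm (Fin n) => y ∘ σ) =
      (mulVecBilin ℝ ℝ).flip y '' {D | ∃ σ : Equiv.Perm (Fin n), σ.permMatrix ℝ = D} := by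
    ext z
    simp [mulVecBilin_apply, permMatrix_mulVec]
  rw [himage, ← LinearMap.image_convexHull, ← doublyStochastic_eq_convexHull_permMatrix] at h
  obtain ⟨D, hD, rfl⟩ := h
  exact ⟨D, hD, rfl⟩

theorem of_sum_abs_sub_le (hsum : ∑ i, x i = ∑ i, y i)
    (habs : ∀ s, ∑ i, |x i - s| ≤ ∑ i, |y i - s|) : VecMaj x y := by
  refine of_mem_convexHull (by_contra fun hx => ?_)
  obtain ⟨f, u, hfu, hux⟩ := geometric_hahn_banach_closed_point (convex_convexHull ℝ _)
    ((Set.finite_range _).isClosed_convexHull ℝ) hx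
  have hf (z : Fin n → ℝ) : f z = ∑ i, z i * f (fun j => if i = j then 1 else 0) :=
    f.toLinearMap.pi_apply_eq_sum_univ z
  obtain ⟨σ, hσ⟩ := exists_perm_sum_mul_le hsum habs fun i => f fun j => if i = j then 1 else 0
  have hyσ := hfu _ (subset_convexHull ℝ _ ⟨σ, rfl⟩)
  rw [hf] at hux hyσ
  exact lt_asymm hux (hyσ.trans_le' hσ)

theorem eventually_map_add_smul_map_one {φ : (Fin n → ℝ) →ₗ[ℝ] (Fin n → ℝ)}
    (H : ∀ a b : Fin n → ℝ, (∀ i, 0 ≤ a i) → ∑ i, a i = 1 →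
      (∀ i, 0 ≤ b i) → ∑ i, b i = 1 → VecMaj a b → VecMaj (φ a) (φ b))
    {a b : Fin n → ℝ} (hab : VecMaj a b) :
    ∀ᶠ t : ℝ in atTop, VecMaj (φ a + t • φ 1) (φ b + t • φ 1) := by
  rcases isEmpty_or_nonempty (Fin n) with _ | _
  · exact .of_forall fun _ => ⟨1, one_mem _, Subsingleton.elim _ _⟩
  filter_upwards [eventually_all.2 fun i => eventually_gt_atTop (-a i),
    eventually_all.2 fun i => eventually_gt_atTop (-b i)] with t ha hb
  have hpq := hab.add_smul_one t
  set p := a + t • 1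
  set q := b + t • 1
  have hp (i : Fin n) : 0 < p i := by
    simp only [p, Pi.add_apply, Pi.smul_apply, Pi.one_apply, smul_eq_mul, mul_one]
    linarith [ha i]
  have hq (i : Fin n) : 0 < q i := by
    simp only [q, Pi.add_apply, Pi.smul_apply, Pi.one_apply, smul_eq_mul, mul_one]
    linarith [hb i]
  set S := ∑ i, q i
  have hS : 0 < S := sum_pos (fun i _ => hq i) univ_nonempty
  have hnorm (z : Fin n → ℝ) (hz : ∑ i, z i = S) : ∑ i, (S⁻¹ • z) i = 1 := by
    simp [← mul_sum, hz, hS.ne']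
  have hS_inv : 0 ≤ S⁻¹ := inv_nonneg.2 hS.le
  have := (H (S⁻¹ • p) (S⁻¹ • q) (fun i => smul_nonneg hS_inv (hp i).le) (hnorm p hpq.sum_eq)
    (fun i => smul_nonneg hS_inv (hq i).le) (hnorm q rfl) (hpq.smul S⁻¹)).smul S
  simpa only [p, q, map_smul, map_add, smul_smul, mul_inv_cancel₀ hS.ne', one_smul] using this

theorem of_eventually_add_smul {X Y c : Fin n → ℝ}
    (h_add : ∀ᶠ t : ℝ in atTop, VecMaj (X + t • c) (Y + t • c))
    (h_sub : ∀ᶠ t : ℝ in atTop, VecMaj (X - t • c) (Y - t • c)) : VecMaj X Y := by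
  refine of_sum_abs_sub_le ?_ fun s => ?_
  · obtain ⟨t, ht⟩ := h_add.exists
    simpa [sum_add_distrib] using ht.sum_eq
  set R := univ.image c
  have hfar : ∀ᶠ T in atTop, ∀ i, ∀ ρ ∈ R, ρ ≠ c i →
      |X i - s| ≤ |T * (c i - ρ)| ∧ |Y i - s| ≤ |T * (c i - ρ)| := by
    refine eventually_all.2 fun i => (eventually_all_finset R).2 fun ρ _ => ?_
    rcases eq_or_ne ρ (c i) with rfl | hρ
    · exact .of_forall fun _ h => absurd rfl h
    have : Tendsto (fun T => |T * (c i - ρ)|) atTop atTop := by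
      simpa only [abs_mul] using
        tendsto_abs_atTop_atTop.atTop_mul_const (abs_pos.2 (sub_ne_zero.2 hρ.symm))
    filter_upwards [this.eventually_ge_atTop |X i - s|, this.eventually_ge_atTop |Y i - s|]
      with T hX hY _ using ⟨hX, hY⟩
  obtain ⟨T, hT_add, hT_sub, hTfar⟩ := (h_add.and (h_sub.and hfar)).exists
  set F : (Fin n → ℝ) → ℝ := fun Z =>
    ∑ ρ ∈ R, ∑ i, (|Z i - s + T * (c i - ρ)| + |Z i - s - T * (c i - ρ)|)
  have hF : F X ≤ F Y := sum_le_sum fun ρ _ => by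
    have h₁ := hT_add.sum_abs_sub_le (s + T * ρ)
    have h₂ := hT_sub.sum_abs_sub_le (s - T * ρ)
    simp only [Pi.add_apply, Pi.sub_apply, Pi.smul_apply, smul_eq_mul] at h₁ h₂
    rw [sum_add_distrib, sum_add_distrib]
    convert add_le_add h₁ h₂ using 3 <;> ring_nf
  have hF_eq (Z : Fin n → ℝ) (hZ : ∀ i, ∀ ρ ∈ R, ρ ≠ c i → |Z i - s| ≤ |T * (c i - ρ)|) :
      F Z = 2 * ∑ i, |Z i - s| + 2 * ∑ i, ∑ ρ ∈ R, |T * (c i - ρ)| := by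
    simp only [F]
    rw [sum_comm (s := R) (t := univ), sum_congr rfl fun i _ =>
      sum_abs_add_add_abs_sub_eq (mem_image_of_mem c (mem_univ i)) (hZ i),
      sum_add_distrib, mul_sum, mul_sum]
  rw [hF_eq X fun i ρ hρ h => (hTfar i ρ hρ h).1, hF_eq Y fun i ρ hρ h => (hTfar i ρ hρ h).2] at hF
  linarith

end VecMaj

theorem stmt8 {n : ℕ} (φ : (Fin n → ℝ) →ₗ[ℝ] (Fin n → ℝ)) :
    (∀ a b : Fin n → ℝ, VecMaj a b → VecMaj (φ a) (φ b)) ↔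
    (∀ a b : Fin n → ℝ, (∀ i, 0 ≤ a i) → ∑ i, a i = 1 →
      (∀ i, 0 ≤ b i) → ∑ i, b i = 1 → VecMaj a b → VecMaj (φ a) (φ b)) := by
  refine ⟨fun h a b _ _ _ _ => h a b, fun H a b hab => ?_⟩
  refine VecMaj.of_eventually_add_smul (c := φ 1)
    (VecMaj.eventually_map_add_smul_map_one H hab) ?_
  filter_upwards [VecMaj.eventually_map_add_smul_map_one H (hab.smul (-1))] with t ht
  simpa [sub_eq_add_neg, add_comm] using ht.smul (-1)
end

section
/- A linear operator φ on R^n preserves majorization on the set of zero-sum vectors if and only if its matrix has the form v e^t + λ P for some v ∈ R^n, λ ∈ R, and permutation matrix P. -/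
open Matrix

/-!
Sufficiency: on zero-sum vectors `v eᵀ + λ P` acts as `x ↦ λ (P x)`, and conjugating a doubly
stochastic matrix by a permutation matrix keeps it doubly stochastic.

Necessity: `x ∘ σ` and `x` majorize each other, hence so do `φ (x ∘ σ)` and `φ x`, which forces
them to be rearrangements of each other (compare the sums `∑ (xᵢ - t)⁺`). A real vector space is
not a finite union of proper subspaces, so one permutation `ρ` with `φ (x ∘ σ) = φ x ∘ ρ` serves
every zero-sum `x`; equivalently, the mean-centred rows of the matrix of `φ` form a set that is
closed under rearranging coordinates. A vector with at most `n` rearrangements is constant or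
takes one value at a single coordinate and another one elsewhere (count the edges
`{i, j}`, `gᵢ ≠ gⱼ`, each giving the rearrangement `g ∘ swap i j`). If some centred row is
not constant, its `n` rearrangements exhaust the `n` rows, and this is the form `v eᵀ + λ P`.
-/

lemma Monotone.eq_of_sum_posPart_sub_eq {n : ℕ} {f g : Fin n → ℝ} (hf : Monotone f)
    (hg : Monotone g) (h : ∀ t, ∑ i, max (f i - t) 0 = ∑ i, max (g i - t) 0) : f = g := by
  by_contra hne
  obtain ⟨i₀, hi₀, hmax⟩ :=
    Finset.exists_max_image (Finset.univ.filter fun i => f i ≠ g i) id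
      (by simpa [Finset.filter_nonempty_iff, funext_iff] using hne)
  replace hi₀ : f i₀ ≠ g i₀ := by simpa using hi₀
  have htail : ∀ j, i₀ < j → f j = g j := fun j hj =>
    by_contra fun hj' => (hmax j (by simpa using hj')).not_gt hj
  clear hmax hne
  -- With `i₀` the last index where `f` and `g` differ and `f i₀ < g i₀`, the threshold
  -- `t = f i₀` kills every term of the `f`-sum up to `i₀`, while the term `g i₀ - t` survives.
  wlog hlt : f i₀ < g i₀ generalizing f g
  · exact this hg hf (fun t => (h t).symm) hi₀.symm (fun j hj => (htail j hj).symm)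
      (lt_of_le_of_ne (not_lt.1 hlt) hi₀.symm)
  refine (Finset.sum_lt_sum (fun i _ => ?_) ⟨i₀, Finset.mem_univ _, ?_⟩).ne (h (f i₀))
  · rcases le_or_gt i i₀ with hi | hi
    · rw [max_eq_right (sub_nonpos.2 (hf hi))]
      exact le_max_right _ _
    · rw [htail i hi]
  · simpa using hlt

namespace VecMaj

variable {n : ℕ}

lemma comp_perm_self (σ : Equiv.Perm (Fin n)) (x : Fin n → ℝ) : VecMaj (x ∘ σ) x :=
  ⟨σ.permMatrix ℝ, permMatrix_mem_doublyStochastic, (permMatrix_mulVec σ).symm⟩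

lemma comp_perm {a b : Fin n → ℝ} (h : VecMaj a b) (σ : Equiv.Perm (Fin n)) :
    VecMaj (a ∘ σ) (b ∘ σ) := by
  obtain ⟨D, hD, rfl⟩ := h
  refine ⟨σ.permMatrix ℝ * D * σ⁻¹.permMatrix ℝ,
    mul_mem (mul_mem permMatrix_mem_doublyStochastic hD) permMatrix_mem_doublyStochastic, ?_⟩
  rw [← mulVec_mulVec, permMatrix_mulVec, ← mulVec_mulVec, permMatrix_mulVec]
  simp [Function.comp_assoc]

lemma smul_s17 {a b : Fin n → ℝ} (h : VecMaj a b) (c : ℝ) : VecMaj (c • a) (c • b) := by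
  obtain ⟨D, hD, rfl⟩ := h
  exact ⟨D, hD, (mulVec_smul D c b).symm⟩

lemma sum_posPart_sub_le {a b : Fin n → ℝ} (h : VecMaj a b) (t : ℝ) :
    ∑ i, max (a i - t) 0 ≤ ∑ i, max (b i - t) 0 := by
  obtain ⟨D, hD, rfl⟩ := h
  have hD₀ : ∀ i j, 0 ≤ D i j := fun i j => nonneg_of_mem_doublyStochastic hD
  have hrow : ∀ i, (D *ᵥ b) i - t = ∑ j, D i j * (b j - t) := fun i => by
    simp only [mulVec, dotProduct, mul_sub, Finset.sum_sub_distrib, ← Finset.sum_mul,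
      sum_row_of_mem_doublyStochastic hD, one_mul]
  calc ∑ i, max ((D *ᵥ b) i - t) 0 ≤ ∑ i, ∑ j, D i j * max (b j - t) 0 := by
        refine Finset.sum_le_sum fun i _ => max_le ?_ ?_
        · rw [hrow]
          gcongr with j
          · exact hD₀ i j
          · exact le_max_left _ _
        · exact Finset.sum_nonneg fun j _ => mul_nonneg (hD₀ i j) (le_max_right _ _)
    _ = ∑ j, max (b j - t) 0 := by
        rw [Finset.sum_comm]
        simp only [← Finset.sum_mul, sum_col_of_mem_doublyStochastic hD, one_mul]

lemma permOf {a b : Fin n → ℝ} (hab : VecMaj a b) (hba : VecMaj b a) :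
    PermOf a b := by
  have hsorted : a ∘ Tuple.sort a = b ∘ Tuple.sort b :=
    (Tuple.monotone_sort a).eq_of_sum_posPart_sub_eq (Tuple.monotone_sort b) fun t =>
      (Equiv.sum_comp _ fun i => max (a i - t) 0).trans <|
        ((hab.sum_posPart_sub_le t).antisymm (hba.sum_posPart_sub_le t)).trans
          (Equiv.sum_comp _ fun i => max (b i - t) 0).symm
  refine ⟨(Tuple.sort a).symm.trans (Tuple.sort b), fun i => ?_⟩
  simpa using congrFun hsorted ((Tuple.sort a).symm i)

end VecMaj

lemma LinearMap.exists_forall_eq_of_forall_exists_eq {K V W ι : Type*} [Field K] [Infinite K]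
    [AddCommGroup V] [Module K V] [AddCommGroup W] [Module K W] [Finite ι]
    {p : Submodule K V} {f : V →ₗ[K] W} {g : ι → V →ₗ[K] W}
    (h : ∀ x ∈ p, ∃ i, f x = g i x) :
    ∃ i, ∀ x ∈ p, f x = g i x := by
  obtain ⟨i, hi⟩ := Subspace.exists_eq_top_of_iUnion_eq_univ
    (p := fun i => (LinearMap.ker (f - g i)).comap p.subtype) <| by
      refine Set.eq_univ_of_forall fun x => Set.mem_iUnion.2 ?_
      obtain ⟨i, hi⟩ := h x x.2
      exact ⟨i, by simpa [sub_eq_zero] using hi⟩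
  refine ⟨i, fun x hx => ?_⟩
  have : (⟨x, hx⟩ : p) ∈ (LinearMap.ker (f - g i)).comap p.subtype := hi ▸ Submodule.mem_top
  simpa [sub_eq_zero] using this

section PermOrbit

open Finset Function

variable {α β : Type*} [DecidableEq α]

lemma setOf_comp_swap_ne {g : α → β} {x y : α} (h : g x ≠ g y) :
    {z | g (Equiv.swap x y z) ≠ g z} = {x, y} := by
  ext z
  by_cases hx : z = x
  · subst hx
    simp [Ne.symm h]
  by_cases hy : z = y
  · subst hy
    simp [h]
  simp [Equiv.swap_apply_of_ne_of_ne hx hy, hx, hy]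

def swapComp (g : α → β) : Sym2 α → α → β :=
  Sym2.lift ⟨fun x y => g ∘ Equiv.swap x y, fun x y => by dsimp only; rw [Equiv.swap_comm]⟩

lemma card_edgeFinset_comap_top_lt_card_orbit [Fintype α] [DecidableEq β] (g : α → β) :
    #((⊤ : SimpleGraph β).comap g).edgeFinset <
      #(univ.image fun σ : Equiv.Perm α => g ∘ σ) := by
  refine lt_of_le_of_lt (card_le_card_of_injOn (swapComp g) (t := (univ.image _).erase g)
    ?_ ?_) (card_erase_lt_of_mem (mem_image.2 ⟨1, mem_univ _, rfl⟩))
  · intro e he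
    induction e using Sym2.ind with | h x y => ?_
    have hxy : g x ≠ g y := by simpa using he
    refine mem_erase.2
      ⟨fun hg => hxy.symm ?_, mem_image.2 ⟨Equiv.swap x y, mem_univ _, rfl⟩⟩
    simpa [swapComp] using congrFun hg x
  · intro e he e' he' hee'
    induction e using Sym2.ind with | h x y => ?_
    induction e' using Sym2.ind with | h x' y' => ?_
    have hxy : g x ≠ g y := by simpa using he
    have hxy' : g x' ≠ g y' := by simpa using he'
    have hset := (setOf_comp_swap_ne hxy).symm.trans
      ((congrArg (fun f => {z | f z ≠ g z}) hee').trans (setOf_comp_swap_ne hxy'))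
    rw [Set.pair_eq_pair_iff] at hset
    exact Sym2.eq_iff.2 hset

lemma exists_eq_update_const_of_card_orbit_le [Fintype α] [DecidableEq β] [Nonempty α]
    {g : α → β} (h : #(univ.image fun σ : Equiv.Perm α => g ∘ σ) ≤ Fintype.card α) :
    ∃ p a b, g = update (const α b) p a := by
  classical
  set G := (⊤ : SimpleGraph β).comap g
  obtain ⟨x, hx⟩ : ∃ x, G.degree x ≤ 1 := by
    -- otherwise the handshake lemma gives at least `card α` edges
    by_contra! hdeg
    have hsum : ∑ _x : α, 2 ≤ ∑ x, G.degree x := sum_le_sum fun x _ => hdeg x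
    have hpos : 0 < Fintype.card α := Fintype.card_pos
    rw [G.sum_degrees_eq_twice_card_edges, sum_const, card_univ, smul_eq_mul] at hsum
    have : #G.edgeFinset < _ := card_edgeFinset_comap_top_lt_card_orbit g
    omega
  rw [← G.card_neighborFinset_eq_degree] at hx
  obtain ⟨p, hp⟩ := card_le_one_iff_subset_singleton.1 hx
  refine ⟨p, g p, g x, funext fun k => ?_⟩
  rcases eq_or_ne k p with rfl | hk
  · simp
  · rw [update_of_ne hk]
    by_contra hne
    exact hk (mem_singleton.1 (hp (by simpa [G] using Ne.symm hne)))

lemma injective_update_const {a b : β} (hab : a ≠ b) :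
    Injective fun p => update (const α b) p a := fun p q hpq => by
  by_contra hne
  exact hab (by simpa [update_of_ne hne] using congrFun hpq p)

lemma exists_eq_const_add_single_of_perm_invariant [Fintype α] [AddCommGroup β]
    (R : α → α → β) (hR : ∀ (σ : Equiv.Perm α) m, ∃ m', R m' = R m ∘ σ) :
    ∃ (c : α → β) (d : β) (τ : Equiv.Perm α),
      ∀ m, R m = const α (c m) + Pi.single (τ m) d := by
  classical
  by_cases hconst : ∀ m, ∃ b, R m = const α b
  · choose c hc using hconst
    exact ⟨c, 0, 1, fun m => by simp [hc]⟩
  push Not at hconst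
  obtain ⟨m₀, hm₀⟩ := hconst
  have : Nonempty α := ⟨m₀⟩
  have horbit : #(univ.image fun σ : Equiv.Perm α => R m₀ ∘ σ) ≤ Fintype.card α := by
    refine (card_le_card fun f hf => ?_).trans (card_image_le (s := univ) (f := R))
    obtain ⟨σ, -, rfl⟩ := mem_image.1 hf
    obtain ⟨m, hm⟩ := hR σ m₀
    exact mem_image.2 ⟨m, mem_univ _, hm⟩
  obtain ⟨p₀, a, b, hg⟩ := exists_eq_update_const_of_card_orbit_le horbit
  have hab : a ≠ b := by
    rintro rfl
    exact hm₀ a (by simp [hg])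
  have hrow : ∀ p, ∃ m, R m = update (const α b) p a := fun p => by
    obtain ⟨m, hm⟩ := hR (Equiv.swap p₀ p) m₀
    exact ⟨m, by rw [hm, hg, update_comp_equiv]; simp⟩
  choose μ hμ using hrow
  have hμ_inj : Injective μ := fun p q hpq =>
    injective_update_const hab ((hμ p).symm.trans ((congrArg R hpq).trans (hμ q)))
  set μe := Equiv.ofBijective μ (Finite.injective_iff_bijective.1 hμ_inj)
  refine ⟨fun _ => b, a - b, μe.symm, fun m => ?_⟩
  have hm := hμ (μe.symm m)
  rw [show μ (μe.symm m) = m from μe.apply_symm_apply m] at hm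
  ext k
  rw [hm]
  rcases eq_or_ne k (μe.symm m) with rfl | hk <;> simp [*, add_sub_cancel]

end PermOrbit

section Center

variable {ι : Type*} [Fintype ι]

noncomputable def meanCenter (w : ι → ℝ) : ι → ℝ :=
  w - Function.const ι ((∑ i, w i) / Fintype.card ι)

lemma meanCenter_comp_perm (w : ι → ℝ) (σ : Equiv.Perm ι) :
    meanCenter (w ∘ σ) = meanCenter w ∘ σ := by
  ext i
  simp [meanCenter, Equiv.sum_comp σ w]

lemma meanCenter_eq_of_dotProduct_eq [DecidableEq ι] {w w' : ι → ℝ}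
    (h : ∀ x : ι → ℝ, ∑ i, x i = 0 → w ⬝ᵥ x = w' ⬝ᵥ x) : meanCenter w = meanCenter w' := by
  ext i
  have hdiff : ∀ j, w i - w j = w' i - w' j := fun j => by
    have := h (Pi.single i 1 - Pi.single j 1) (by simp [Finset.sum_sub_distrib])
    simpa only [dotProduct_sub, dotProduct_single, mul_one] using this
  have hsum := Finset.sum_congr rfl fun j (_ : j ∈ Finset.univ) => hdiff j
  have : Nonempty ι := ⟨i⟩
  have hcard : (Fintype.card ι : ℝ) ≠ 0 := Nat.cast_ne_zero.2 Fintype.card_ne_zero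
  simp only [Finset.sum_sub_distrib, Finset.sum_const, Finset.card_univ, nsmul_eq_mul] at hsum
  simp only [meanCenter, Pi.sub_apply, Function.const_apply]
  field_simp
  linarith

end Center

def PreservesZeroSumVecMaj {n : ℕ} (φ : (Fin n → ℝ) →ₗ[ℝ] (Fin n → ℝ)) : Prop :=
  ∀ a b : Fin n → ℝ, ∑ i, a i = 0 → ∑ i, b i = 0 → VecMaj a b → VecMaj (φ a) (φ b)

namespace PreservesZeroSumVecMaj

variable {n : ℕ} {φ : (Fin n → ℝ) →ₗ[ℝ] (Fin n → ℝ)}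

lemma exists_comp_perm_eq (H : PreservesZeroSumVecMaj φ) (σ : Equiv.Perm (Fin n))
    {x : Fin n → ℝ} (hx : ∑ i, x i = 0) : ∃ ρ : Equiv.Perm (Fin n), φ (x ∘ σ) = φ x ∘ ρ := by
  have hxσ : ∑ i, (x ∘ σ) i = 0 := (Equiv.sum_comp σ x).trans hx
  have hback : VecMaj x (x ∘ σ) := by
    simpa [Function.comp_assoc] using VecMaj.comp_perm_self σ⁻¹ (x ∘ σ)
  obtain ⟨ρ, hρ⟩ := (H _ _ hxσ hx (VecMaj.comp_perm_self σ x)).permOf (H _ _ hx hxσ hback)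
  exact ⟨ρ, funext hρ⟩

lemma exists_forall_comp_perm_eq (H : PreservesZeroSumVecMaj φ) (σ : Equiv.Perm (Fin n)) :
    ∃ ρ : Equiv.Perm (Fin n), ∀ x : Fin n → ℝ, ∑ i, x i = 0 → φ (x ∘ σ) = φ x ∘ ρ := by
  have hmem : ∀ x : Fin n → ℝ,
      x ∈ LinearMap.ker (∑ i, LinearMap.proj i : (Fin n → ℝ) →ₗ[ℝ] ℝ) ↔ ∑ i, x i = 0 := by
    simp
  obtain ⟨ρ, hρ⟩ := LinearMap.exists_forall_eq_of_forall_exists_eq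
    (f := φ ∘ₗ LinearMap.funLeft ℝ ℝ σ)
    (g := fun ρ : Equiv.Perm (Fin n) => LinearMap.funLeft ℝ ℝ ρ ∘ₗ φ)
    fun x hx => H.exists_comp_perm_eq σ ((hmem x).1 hx)
  exact ⟨ρ, fun x hx => hρ x ((hmem x).2 hx)⟩

lemma exists_meanCenter_row_eq (H : PreservesZeroSumVecMaj φ) (σ : Equiv.Perm (Fin n))
    (m : Fin n) :
    ∃ m', meanCenter (LinearMap.toMatrix' φ m') = meanCenter (LinearMap.toMatrix' φ m) ∘ σ := by
  obtain ⟨ρ, hρ⟩ := H.exists_forall_comp_perm_eq σ⁻¹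
  refine ⟨ρ m, ?_⟩
  rw [← meanCenter_comp_perm]
  refine meanCenter_eq_of_dotProduct_eq fun x hx => ?_
  have := congrFun (hρ x hx) m
  rw [← LinearMap.toMatrix'_mulVec, ← LinearMap.toMatrix'_mulVec] at this
  rw [← dotProduct_comp_equiv_symm]
  exact this.symm

end PreservesZeroSumVecMaj

lemma Matrix.of_const_add_smul_permMatrix_mulVec {ι : Type*} [Fintype ι] [DecidableEq ι]
    (v : ι → ℝ) (c : ℝ) (τ : Equiv.Perm ι) {x : ι → ℝ} (hx : ∑ i, x i = 0) :
    ((of fun i _ => v i) + c • τ.permMatrix ℝ) *ᵥ x = c • (x ∘ τ) := by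
  rw [add_mulVec, smul_mulVec, permMatrix_mulVec]
  ext i
  simp [mulVec, dotProduct, ← Finset.mul_sum, hx]

theorem stmt17 {n : ℕ} (φ : (Fin n → ℝ) →ₗ[ℝ] (Fin n → ℝ)) :
    (∀ a b : Fin n → ℝ, ∑ i, a i = 0 → ∑ i, b i = 0 →
      VecMaj a b → VecMaj (φ a) (φ b)) ↔
    ∃ (v : Fin n → ℝ) (lam : ℝ) (Q : Matrix (Fin n) (Fin n) ℝ),
      IsPermMatrix Q ∧
        LinearMap.toMatrix' φ = (Matrix.of fun i _ => v i) + lam • Q := by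
  constructor
  · intro (H : PreservesZeroSumVecMaj φ)
    obtain ⟨c, d, τ, hrows⟩ :=
      exists_eq_const_add_single_of_perm_invariant _ H.exists_meanCenter_row_eq
    refine ⟨fun m => (∑ j, LinearMap.toMatrix' φ m j) / n + c m, d, τ.permMatrix ℝ,
      ⟨τ, rfl⟩, ?_⟩
    ext m j
    have := congrFun (hrows m) j
    simp only [meanCenter, LinearMap.toMatrix'_apply, Fintype.card_fin, Pi.sub_apply,
      Function.const_apply, Pi.add_apply, Pi.single_apply, eq_comm, Matrix.add_apply, of_apply,
      Matrix.smul_apply, PEquiv.toMatrix_apply, Equiv.toPEquiv_apply, Option.mem_def,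
      Option.some.injEq, smul_eq_mul, mul_ite, mul_one, mul_zero] at this ⊢
    linarith
  · rintro ⟨v, lam, Q, ⟨τ, rfl⟩, hA⟩ a b ha hb hab
    rw [← LinearMap.toMatrix'_mulVec φ a, ← LinearMap.toMatrix'_mulVec φ b, hA,
      of_const_add_smul_permMatrix_mulVec v lam τ ha,
      of_const_add_smul_permMatrix_mulVec v lam τ hb]
    exact (hab.comp_perm τ).smul_s17 lam
end

section
/- Let P be an n×n permutation matrix with n ≥ 3 such that for all g, h and all permutation matrices Q, the n×2 matrix with columns (e_g − e_h) and P(e_g − e_h) equals, after a row permutation, the n×2 matrix with columns (e_g − e_h) and Q^{-1}PQ(e_g − e_h). Then P = I. -/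
open Matrix

/-- The `n × 2` matrix with columns `u` and `w`. -/
def pairCols {n : ℕ} (u w : Fin n → ℝ) : Matrix (Fin n) (Fin 2) ℝ :=
  Matrix.of fun i c => if c = 0 then u i else w i

lemma permMatrix_mulVec' {n : ℕ} (σ : Equiv.Perm (Fin n)) (u : Fin n → ℝ) :
    (σ.permMatrix ℝ).mulVec u = fun i => u (σ i) := by
  ext i
  simp [Matrix.mulVec, dotProduct, PEquiv.toMatrix_apply, Equiv.toPEquiv_apply]

lemma permMatrix_inv' {n : ℕ} (τ : Equiv.Perm (Fin n)) :
    (τ.permMatrix ℝ)⁻¹ = (τ⁻¹).permMatrix ℝ := by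
  apply Matrix.inv_eq_left_inv
  rw [PEquiv.toMatrix_toPEquiv_mul]
  ext i j
  simp [Matrix.submatrix, PEquiv.toMatrix_apply, Equiv.toPEquiv_apply, Matrix.one_apply, eq_comm]


theorem stmt19 {n : ℕ} (hn : 3 ≤ n) (P : Matrix (Fin n) (Fin n) ℝ)
    (hP : IsPermMatrix P)
    (h : ∀ g h' : Fin n, ∀ Q : Matrix (Fin n) (Fin n) ℝ, IsPermMatrix Q →
      ∃ R : Matrix (Fin n) (Fin n) ℝ, IsPermMatrix R ∧
        pairCols (Pi.single g 1 - Pi.single h' 1)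
            (P.mulVec (Pi.single g 1 - Pi.single h' 1)) =
          R * pairCols (Pi.single g 1 - Pi.single h' 1)
            ((Q⁻¹ * P * Q).mulVec (Pi.single g 1 - Pi.single h' 1))) :
    P = 1 := by
  obtain ⟨σ, rfl⟩ := hP
  by_contra hne
  have hσ : σ ≠ 1 := by
    rintro rfl
    apply hne
    ext i j
    simp [Equiv.Perm.permMatrix, PEquiv.toMatrix_apply, Equiv.toPEquiv_apply,
      Matrix.one_apply, eq_comm]
  obtain ⟨a, hx⟩ : ∃ x, σ x ≠ x := by
    by_contra hall
    push_neg at hall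
    exact hσ (Equiv.ext fun i => by simp [hall i])
  set g : Fin n := σ a with hg
  have hag : a ≠ g := fun e => hx e.symm
  have hσinv : σ⁻¹ g = a := by simp [hg]
  -- find h' ∉ {g, a}
  have hcard : ¬ (Finset.univ ⊆ ({g, a} : Finset (Fin n))) := by
    intro hsub
    have := Finset.card_le_card hsub
    have h2 : ({g, a} : Finset (Fin n)).card ≤ 2 :=
      (Finset.card_insert_le _ _).trans (by simp)
    simp [Finset.card_univ] at this
    omega
  obtain ⟨h', -, hh'⟩ := Finset.not_subset.mp hcard
  simp [Finset.mem_insert] at hh'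
  obtain ⟨hh'g, hh'a⟩ := hh'
  set τ : Equiv.Perm (Fin n) := Equiv.swap a h' with hτ
  obtain ⟨R, ⟨ρ, rfl⟩, heq⟩ := h g h' (τ.permMatrix ℝ) ⟨τ, rfl⟩
  set v : Fin n → ℝ := Pi.single g 1 - Pi.single h' 1 with hv
  -- value lemma for v
  have hvval : ∀ j, v j = if j = g then 1 else if j = h' then -1 else 0 := by
    intro j
    have hbase : v j = (if j = g then (1:ℝ) else 0) - (if j = h' then 1 else 0) := by
      simp [hv, Pi.single_apply]
    rw [hbase]
    by_cases h1 : j = g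
    · subst h1; simp [Ne.symm hh'g]
    · by_cases h2 : j = h' <;> simp [h1, h2, hh'g] <;> norm_num
  -- rewrite mulVecs
  rw [permMatrix_inv'] at heq
  have hw : (σ.permMatrix ℝ).mulVec v = fun i => v (σ i) := permMatrix_mulVec' σ v
  have hw' : ((τ⁻¹.permMatrix ℝ) * σ.permMatrix ℝ * τ.permMatrix ℝ).mulVec v
      = fun i => v (τ (σ (τ⁻¹ i))) := by
    ext i
    rw [← Matrix.mulVec_mulVec, ← Matrix.mulVec_mulVec, permMatrix_mulVec']
    rw [permMatrix_mulVec']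
    simp [permMatrix_mulVec']
  rw [hw, hw'] at heq
  rw [PEquiv.toMatrix_toPEquiv_mul] at heq
  -- entry (h', 0): v h' = v (ρ h') forces ρ h' = h'
  have e0 := congrFun (congrFun heq h') 0
  have e1 := congrFun (congrFun heq h') 1
  simp [pairCols, Matrix.submatrix] at e0 e1
  -- e0 : v h' = v (ρ h')
  have hρ : ρ h' = h' := by
    have hvh' : v h' = -1 := by rw [hvval]; simp [hh'g]
    rw [hvval (ρ h'), hvval h'] at e0
    simp [hh'g] at e0
    by_cases h1 : ρ h' = g
    · simp [h1, Ne.symm hh'g] at e0; norm_num at e0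
    · by_cases h2 : ρ h' = h'
      · exact h2
      · simp [h1, h2] at e0
  rw [hρ] at e1
  -- e1 : v (σ h') = v (τ (σ (τ⁻¹ h')))
  have hrhs : v (τ (σ (τ⁻¹ h'))) = 1 := by
    have h1 : τ⁻¹ h' = a := by simp [hτ, Equiv.swap_inv, Equiv.swap_apply_right]
    have h2 : σ a = g := hg.symm
    rw [h1, h2]
    have : τ g = g := Equiv.swap_apply_of_ne_of_ne (fun e => hag e.symm) (fun e => hh'g e.symm)
    rw [this, hvval]; simp
  have hlhs : v (σ h') ≠ 1 := by
    rw [hvval]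
    have h1 : σ h' ≠ g := by
      intro e
      exact hh'a (by rw [← hσinv, ← e]; simp)
    simp [h1]
    by_cases h2 : σ h' = h' <;> simp [h2] <;> norm_num
  exact hlhs (e1.trans hrhs)
end
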